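/- arXiv:1503.09069 — 5 statements merged into one kernel-verified Lean document; each statement's English description precedes it below -/
import Mathlib

section
/- Let w, b, T be natural numbers with w + b = T and T ≥ m ≥ 1, and let a_k = (m−k)·A − (m−k−1)·B for rationals A, B, 0 ≤ k ≤ m. Then ∑_{k=0}^{m} a_{m−k} · C(w,k)·C(b,m−k)/C(T,m) = (w/T)·m·(A − B) + B. In particular, the conditional expectation of the increment of white balls under sampling without replacement is affine linear in w. -/
/-!
Rewriting `a (m - k) = k * (A - B) + B` turns the left-hand side into `A - B` times the
hypergeometric mean `m * w / T` of the number of white balls drawn, plus `B` times the total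
mass of the hypergeometric distribution, which is `1` by Vandermonde's identity. The mean comes
from the same identity after absorbing the weight via `k * C(w, k) = w * C(w - 1, k - 1)`.
-/

open Finset

theorem Nat.sum_range_choose_mul_choose_sub (w b m : ℕ) :
    ∑ k ∈ range (m + 1), w.choose k * b.choose (m - k) = (w + b).choose m := by
  rw [Nat.add_choose_eq, Finset.Nat.sum_antidiagonal_eq_sum_range_succ_mk]

theorem Nat.add_mul_sum_range_mul_choose_mul_choose_sub (w b m : ℕ) :
    (w + b) * ∑ k ∈ range (m + 1), k * (w.choose k * b.choose (m - k))
      = m * w * (w + b).choose m := by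
  rcases m with _ | m
  · simp
  rcases w with _ | w
  · have vanish : ∀ k, k * choose 0 k = 0 := fun k => by cases k <;> simp
    simp [← Nat.mul_assoc, vanish]
  have absorb : ∀ j ∈ range (m + 1),
      (j + 1) * ((w + 1).choose (j + 1) * b.choose (m + 1 - (j + 1)))
        = (w + 1) * (w.choose j * b.choose (m - j)) := by
    intro j _
    rw [Nat.add_sub_add_right, ← Nat.mul_assoc, Nat.mul_comm (j + 1),
      ← Nat.add_one_mul_choose_eq, Nat.mul_assoc]
  rw [sum_range_succ', sum_congr rfl absorb, ← mul_sum, Nat.sum_range_choose_mul_choose_sub,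
    Nat.zero_mul, Nat.add_zero]
  calc (w + 1 + b) * ((w + 1) * (w + b).choose m)
      = (w + 1) * ((w + b + 1) * (w + b).choose m) := by ring
    _ = (w + 1) * ((w + b + 1).choose (m + 1) * (m + 1)) := by
      rw [Nat.add_one_mul_choose_eq]
    _ = (m + 1) * (w + 1) * (w + 1 + b).choose (m + 1) := by
      rw [Nat.add_right_comm w b 1]; ring

theorem affine_increment_without_replacement_general (m w b T : ℕ) (A B : ℚ)
    (hT : w + b = T) (hmT : m ≤ T) (a : ℕ → ℚ)
    (ha : ∀ k ≤ m, a k = ((m : ℚ) - k) * A - ((m : ℚ) - k - 1) * B) :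
    ∑ k ∈ range (m + 1),
        a (m - k) * ((w.choose k * b.choose (m - k) : ℚ) / (T.choose m))
      = (w / T) * m * (A - B) + B := by
  subst hT
  have total : ∑ k ∈ range (m + 1), (w.choose k * b.choose (m - k) : ℚ) = (w + b).choose m := by
    exact_mod_cast Nat.sum_range_choose_mul_choose_sub w b m
  have mean : ((w : ℚ) + b) * ∑ k ∈ range (m + 1), (k : ℚ) * (w.choose k * b.choose (m - k))
      = m * w * (w + b).choose m := by
    exact_mod_cast Nat.add_mul_sum_range_mul_choose_mul_choose_sub w b m
  have affine : ∀ k ∈ range (m + 1),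
      a (m - k) * ((w.choose k * b.choose (m - k) : ℚ) / ((w + b).choose m))
        = ((A - B) * (k * (w.choose k * b.choose (m - k)))
            + B * (w.choose k * b.choose (m - k))) / ((w + b).choose m) := by
    intro k hk
    rw [ha (m - k) (Nat.sub_le m k), Nat.cast_sub (Nat.lt_succ_iff.mp (mem_range.mp hk))]
    ring
  rw [sum_congr rfl affine, ← sum_div, sum_add_distrib, ← mul_sum, ← mul_sum, total]
  have hN : ((w + b).choose m : ℚ) ≠ 0 := Nat.cast_ne_zero.mpr (Nat.choose_pos hmT).ne'
  rcases (w + b).eq_zero_or_pos with hT0 | hTpos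
  · obtain rfl : m = 0 := by omega
    obtain rfl : w = 0 := by omega
    simp
  have hT : (w : ℚ) + b ≠ 0 := by exact_mod_cast hTpos.ne'
  generalize ∑ k ∈ range (m + 1), (k : ℚ) * (w.choose k * b.choose (m - k)) = S at mean ⊢
  push_cast
  field_simp
  linear_combination (A - B) * mean

/-- Under the affinity condition, the conditional expected increment of white balls
under sampling without replacement (hypergeometric sampling) is affine linear in `w`. -/
theorem affine_increment_without_replacement (m w b T : ℕ) (A B : ℚ)
    (hT : w + b = T) (hm : 1 ≤ m) (hmT : m ≤ T) (a : ℕ → ℚ)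
    (ha : ∀ k ≤ m, a k = ((m : ℚ) - k) * A - ((m : ℚ) - k - 1) * B) :
    ∑ k ∈ range (m + 1),
        a (m - k) * ((w.choose k * b.choose (m - k) : ℚ) / (T.choose m))
      = (w / T) * m * (A - B) + B :=
  affine_increment_without_replacement_general m w b T A B hT hmT a ha
end

section
/- For real (or rational) numbers x, y with y ≠ x + 1 and suitable non-degeneracy (denominators nonzero), the summation identity ∑_{k=1}^{s} C(k+x, k)/C(k+y, k) = ((s+1+y)·C(s+1+x, s+1))/((x+1−y)·C(s+1+y, s+1)) − (x+1)/(x+1−y) holds, where C(z, k) = z(z−1)⋯(z−k+1)/k! denotes the generalized binomial coefficient. -/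
open Finset Polynomial

/-- Generalized binomial coefficient `C(z,k) = z(z-1)⋯(z-k+1)/k!` for real `z`. -/
noncomputable def genChoose (z : ℝ) (k : ℕ) : ℝ :=
  (descPochhammer ℝ k).eval z / k.factorial

/-! With `t k = C(k+x,k) / C(k+y,k)` one has `t (k+1) = t k · (k+1+x) / (k+1+y)`, hence
`(k+1+y) t (k+1) - (k+y) t k = (x+1-y) t k`, and the sum telescopes. -/

@[simp]
theorem genChoose_zero (z : ℝ) : genChoose z 0 = 1 := by
  simp [genChoose]

theorem genChoose_succ_succ (z : ℝ) (k : ℕ) :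
    genChoose (z + 1) (k + 1) = (z + 1) / (k + 1) * genChoose z k := by
  have hk : (k : ℝ) + 1 ≠ 0 := k.cast_add_one_ne_zero
  simp only [genChoose, descPochhammer_succ_left, eval_mul, eval_X, eval_comp, eval_sub,
    eval_one, add_sub_cancel_right, Nat.factorial_succ, Nat.cast_mul, Nat.cast_succ]
  field_simp

theorem genChoose_natCast_succ_add (z : ℝ) (k : ℕ) :
    genChoose (↑(k + 1) + z) (k + 1) = (↑(k + 1) + z) / ↑(k + 1) * genChoose (k + z) k := by
  push_cast
  rw [add_right_comm, genChoose_succ_succ, add_right_comm]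

theorem genChoose_natCast_add_ne_zero_of_le {y : ℝ} {n k : ℕ}
    (hn : genChoose (n + y) n ≠ 0) (hk : k ≤ n) : genChoose (k + y) k ≠ 0 := by
  induction n with
  | zero => simp [Nat.le_zero.mp hk]
  | succ n ih =>
    rcases hk.eq_or_lt with rfl | hk
    · exact hn
    · rw [genChoose_natCast_succ_add] at hn
      exact ih (right_ne_zero_of_mul hn) (Nat.le_of_lt_succ hk)

section Telescoping

variable (x y : ℝ)

theorem natCast_add_mul_genChoose_div_succ_sub {k : ℕ}
    (hk : genChoose (↑(k + 1) + y) (k + 1) ≠ 0) :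
    (↑(k + 1) + y) * (genChoose (↑(k + 1) + x) (k + 1) / genChoose (↑(k + 1) + y) (k + 1))
      - (k + y) * (genChoose (k + x) k / genChoose (k + y) k)
      = (x + 1 - y) * (genChoose (k + x) k / genChoose (k + y) k) := by
  have hG : genChoose (k + y) k ≠ 0 := genChoose_natCast_add_ne_zero_of_le hk k.le_succ
  have hy : (↑(k + 1) + y) ≠ 0 := by
    rw [genChoose_natCast_succ_add] at hk
    exact left_ne_zero_of_mul (left_ne_zero_of_mul hk)
  have hk1 : ((k + 1 : ℕ) : ℝ) ≠ 0 := by positivity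
  rw [genChoose_natCast_succ_add, genChoose_natCast_succ_add]
  field_simp
  push_cast
  ring

theorem mul_sum_range_genChoose_div {n : ℕ} (hn : genChoose (n + y) n ≠ 0) :
    (x + 1 - y) * ∑ k ∈ range n, genChoose (k + x) k / genChoose (k + y) k
      = (n + y) * (genChoose (n + x) n / genChoose (n + y) n) - y := by
  let u : ℕ → ℝ := fun k ↦ (k + y) * (genChoose (k + x) k / genChoose (k + y) k)
  calc (x + 1 - y) * ∑ k ∈ range n, genChoose (k + x) k / genChoose (k + y) k
      = ∑ k ∈ range n, (u (k + 1) - u k) := by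
        rw [mul_sum]
        refine sum_congr rfl fun k hk ↦ ?_
        exact (natCast_add_mul_genChoose_div_succ_sub x y
          (genChoose_natCast_add_ne_zero_of_le hn (mem_range.mp hk))).symm
    _ = u n - u 0 := sum_range_sub u n
    _ = (n + y) * (genChoose (n + x) n / genChoose (n + y) n) - y := by simp [u]

end Telescoping

theorem sum_ratio_genChoose_general (x y : ℝ) (s : ℕ) (hxy : x + 1 ≠ y)
    (hden' : genChoose (s + 1 + y) (s + 1) ≠ 0) :
    ∑ k ∈ Icc 1 s, genChoose (k + x) k / genChoose (k + y) k
      = ((s + 1 + y) * genChoose (s + 1 + x) (s + 1))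
          / ((x + 1 - y) * genChoose (s + 1 + y) (s + 1))
        - (x + 1) / (x + 1 - y) := by
  have hxy' : x + 1 - y ≠ 0 := sub_ne_zero.mpr hxy
  have hsum := mul_sum_range_genChoose_div x y (n := s + 1) (by exact_mod_cast hden')
  rw [sum_range_eq_add_Ico _ (by omega : 0 < s + 1), Ico_add_one_right_eq_Icc] at hsum
  simp only [Nat.cast_zero, zero_add, genChoose_zero, div_one, Nat.cast_add_one] at hsum
  field_simp at hsum ⊢
  linear_combination hsum

/-- The summation identity
`∑_{k=1}^{s} C(k+x,k)/C(k+y,k)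
   = (s+1+y)·C(s+1+x,s+1)/((x+1-y)·C(s+1+y,s+1)) - (x+1)/(x+1-y)`. -/
theorem sum_ratio_genChoose (x y : ℝ) (s : ℕ) (hxy : x + 1 ≠ y)
    (hden : ∀ k ∈ Icc 1 s, genChoose (k + y) k ≠ 0)
    (hden' : genChoose (s + 1 + y) (s + 1) ≠ 0) :
    ∑ k ∈ Icc 1 s, genChoose (k + x) k / genChoose (k + y) k
      = ((s + 1 + y) * genChoose (s + 1 + x) (s + 1))
          / ((x + 1 - y) * genChoose (s + 1 + y) (s + 1))
        - (x + 1) / (x + 1 - y) :=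
  sum_ratio_genChoose_general x y s hxy hden'
end

section
/- Suppose (x_n), (c_n), (d_n) are nonnegative real sequences satisfying x_{n+1} ≤ c_n·x_n + d_n with 0 < c_n < 1 for all n ≥ 1. If ∏_{i=1}^{n} c_i → 0 as n → ∞ and ∑_{n=1}^{∞} d_n < ∞, then x_n → 0. -/
/-!
Unrolling the recursion from a starting index `m` gives
`x n ≤ (∏_{m ≤ i < n} c i) * x m + ∑_{m ≤ i < n} d i`. Choose `m` so that every partial sum of
the tail of `∑ d` is below `ε / 2`; since the head product `∏_{1 ≤ i < m} c i` is nonzero, the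
product from `m` on still tends to `0`, so the first term is eventually below `ε / 2` as well.
-/

open Finset Filter Topology

theorem Summable.eventually_norm_sum_Ico_lt {E : Type*} [SeminormedAddCommGroup E] {f : ℕ → E}
    (hf : Summable f) {ε : ℝ} (hε : 0 < ε) :
    ∀ᶠ m in atTop, ∀ n, m ≤ n → ‖∑ i ∈ Ico m n, f i‖ < ε := by
  obtain ⟨N, hN⟩ := Metric.cauchySeq_iff.1 hf.hasSum.tendsto_sum_nat.cauchySeq ε hε
  filter_upwards [eventually_ge_atTop N] with m hm n hmn
  rw [sum_Ico_eq_sub _ hmn, ← dist_eq_norm]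
  exact hN n (hm.trans hmn) m hm

theorem le_prod_Ico_mul_add_sum_Ico_of_le_mul_add {x c d : ℕ → ℝ} {m : ℕ}
    (hc : ∀ i, m ≤ i → 0 ≤ c i ∧ c i ≤ 1) (hd : ∀ i, m ≤ i → 0 ≤ d i)
    (hrec : ∀ i, m ≤ i → x (i + 1) ≤ c i * x i + d i) {n : ℕ} (hmn : m ≤ n) :
    x n ≤ (∏ i ∈ Ico m n, c i) * x m + ∑ i ∈ Ico m n, d i := by
  induction n, hmn using Nat.le_induction with
  | base => simp
  | succ n hmn ih =>
    have hS : 0 ≤ ∑ i ∈ Ico m n, d i :=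
      sum_nonneg fun i hi => hd i (mem_Ico.1 hi).1
    obtain ⟨hc₀, hc₁⟩ := hc n hmn
    rw [prod_Ico_succ_top hmn, sum_Ico_succ_top hmn]
    calc x (n + 1) ≤ c n * x n + d n := hrec n hmn
      _ ≤ c n * ((∏ i ∈ Ico m n, c i) * x m + ∑ i ∈ Ico m n, d i) + d n := by gcongr
      _ = (∏ i ∈ Ico m n, c i) * c n * x m + c n * ∑ i ∈ Ico m n, d i + d n := by ring
      _ ≤ (∏ i ∈ Ico m n, c i) * c n * x m + (∑ i ∈ Ico m n, d i + d n) := by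
        linarith [mul_le_of_le_one_left hS hc₁]

theorem tendsto_prod_Ico_zero_of_tendsto_prod_Icc_one_zero {c : ℕ → ℝ}
    (hprod : Tendsto (fun n => ∏ i ∈ Icc 1 n, c i) atTop (𝓝 0))
    {m : ℕ} (hm : 1 ≤ m) (hc : ∀ i, 1 ≤ i → i < m → c i ≠ 0) :
    Tendsto (fun n => ∏ i ∈ Ico m n, c i) atTop (𝓝 0) := by
  have hhead : ∏ i ∈ Ico 1 m, c i ≠ 0 :=
    prod_ne_zero_iff.2 fun i hi => hc i (mem_Ico.1 hi).1 (mem_Ico.1 hi).2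
  rw [← tendsto_add_atTop_iff_nat 1]
  have hscaled : Tendsto (fun n => (∏ i ∈ Ico 1 m, c i)⁻¹ * ∏ i ∈ Icc 1 n, c i) atTop (𝓝 0) := by
    simpa using hprod.const_mul (∏ i ∈ Ico 1 m, c i)⁻¹
  refine hscaled.congr' ?_
  filter_upwards [eventually_ge_atTop m] with n hn
  rw [← Ico_add_one_right_eq_Icc, ← prod_Ico_consecutive c hm (by omega : m ≤ n + 1),
    inv_mul_cancel_left₀ hhead]

/-- If `x_{n+1} ≤ c_n x_n + d_n` with `0 < c_n < 1`, `∏ c_i → 0` and `∑ d_n < ∞`,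
then `x_n → 0`. -/
theorem tendsto_zero_of_recursive_bound (x c d : ℕ → ℝ)
    (hx : ∀ n, 1 ≤ n → 0 ≤ x n) (hc : ∀ n, 1 ≤ n → 0 < c n ∧ c n < 1)
    (hd : ∀ n, 1 ≤ n → 0 ≤ d n)
    (hrec : ∀ n, 1 ≤ n → x (n + 1) ≤ c n * x n + d n)
    (hprod : Tendsto (fun n => ∏ i ∈ Icc 1 n, c i) atTop (𝓝 0))
    (hsum : Summable d) :
    Tendsto x atTop (𝓝 0) := by
  refine tendsto_order.2 ⟨fun a ha => eventually_atTop.2 ⟨1, fun n hn => ha.trans_le (hx n hn)⟩,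
    fun ε hε => ?_⟩
  obtain ⟨m, htail, hm⟩ :=
    ((hsum.eventually_norm_sum_Ico_lt (half_pos hε)).and (eventually_ge_atTop 1)).exists
  have hhead : Tendsto (fun n => (∏ i ∈ Ico m n, c i) * x m) atTop (𝓝 0) := by
    simpa using (tendsto_prod_Ico_zero_of_tendsto_prod_Icc_one_zero hprod hm
      fun i hi _ => (hc i hi).1.ne').mul_const (x m)
  filter_upwards [eventually_ge_atTop m, hhead.eventually (gt_mem_nhds (half_pos hε))]
    with n hmn hn
  calc x n ≤ (∏ i ∈ Ico m n, c i) * x m + ∑ i ∈ Ico m n, d i :=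
        le_prod_Ico_mul_add_sum_Ico_of_le_mul_add
          (fun i hi => ⟨(hc i (hm.trans hi)).1.le, (hc i (hm.trans hi)).2.le⟩)
          (fun i hi => hd i (hm.trans hi)) (fun i hi => hrec i (hm.trans hi)) hmn
    _ < ε / 2 + ε / 2 := add_lt_add hn ((Real.le_norm_self _).trans_lt (htail n hmn))
    _ = ε := add_halves ε
end

section
/- Let W_n satisfy E[W_n | 𝓕_{n−1}] = ((T_{n−1} + c)/T_{n−1})·W_{n−1} + β with T_n = σn + T₀, σ ≥ 1, T₀ + c > 0, and let Λ = c/σ < 1, β ≥ 0. Then the expectation satisfies E[W_n] = (β/(1−Λ))·n + O(n^Λ) + O(1) as n → ∞. If Λ = 1 (forcing β = 0 under tenability), then E[W_n] = W₀·(nσ + T₀)/T₀ exactly. -/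
/-!
Taking expectations turns the conditional recursion into the deterministic affine recursion
`a (n+1) = r n * a n + β` with `r n = (T_n + c) / T_n`. For `Λ ≠ 1` the sequence `b T_n / σ`,
`b = β / (1 - Λ)`, is a particular solution, so
`a n - b n - b T₀ / σ = (a 0 - b T₀ / σ) ∏_{k<n} r k`.
When `c ≤ 0` the product is at most `1`; when `c ≥ 0`, `1 + x ≤ exp x` and
`log (T_{k+1} / T_k) ≥ σ / T_{k+1}` give `r (k+1) ≤ (T_{k+1} / T_k) ^ Λ`, so the product telescopes
to at most `r 0 (T_n / T₀) ^ Λ = O(n ^ Λ)`. For `Λ = 1` it telescopes exactly to `T_n / T₀`.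
-/

open MeasureTheory Filter Asymptotics Finset

theorem sub_eq_mul_prod_of_affine_recurrence {R : Type*} [CommRing R] {a p r : ℕ → R} {β : R}
    (ha : ∀ k, a (k + 1) = r k * a k + β) (hp : ∀ k, p (k + 1) = r k * p k + β) (n : ℕ) :
    a n - p n = (a 0 - p 0) * ∏ k ∈ range n, r k := by
  induction n with
  | zero => simp
  | succ n ih => rw [ha, hp, prod_range_succ, ← mul_assoc, ← ih]; ring

theorem integral_eq_of_condExp_ae_eq_affine {Ω : Type*} {m m0 : MeasurableSpace Ω}
    {μ : Measure Ω} [IsProbabilityMeasure μ] {X Y : Ω → ℝ} (hm : m ≤ m0) (hY : Integrable Y μ)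
    {r β : ℝ} (h : μ[X | m] =ᵐ[μ] fun ω => r * Y ω + β) :
    ∫ ω, X ω ∂μ = r * ∫ ω, Y ω ∂μ + β := by
  rw [← integral_condExp hm, integral_congr_ae h, integral_add (hY.const_mul r)
    (integrable_const β), integral_const_mul, integral_const, probReal_univ, one_smul]

theorem one_add_mul_sub_div_le_rpow_div {s t Λ : ℝ} (hs : 0 < s) (ht : 0 < t) (hΛ : 0 ≤ Λ) :
    1 + Λ * ((t - s) / t) ≤ (t / s) ^ Λ := by
  have hlog : (t - s) / t ≤ Real.log (t / s) := by
    have := Real.one_sub_inv_le_log_of_pos (div_pos ht hs)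
    rwa [inv_div, one_sub_div ht.ne'] at this
  calc 1 + Λ * ((t - s) / t) ≤ Real.exp (Λ * ((t - s) / t)) := by
        linarith [Real.add_one_le_exp (Λ * ((t - s) / t))]
    _ ≤ Real.exp (Real.log (t / s) * Λ) := by
        rw [mul_comm]; gcongr
    _ = (t / s) ^ Λ := (Real.rpow_def_of_pos (div_pos ht hs) Λ).symm

theorem isBigO_one_rpow_add_one (Λ : ℝ) :
    (fun _ : ℕ => (1 : ℝ)) =O[atTop] fun n : ℕ => (n : ℝ) ^ Λ + 1 := by
  refine isBigO_of_le _ fun n => ?_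
  have : 0 ≤ (n : ℝ) ^ Λ := by positivity
  rw [norm_one, Real.norm_of_nonneg (by positivity)]
  linarith

namespace AffineUrn

def total (σ T₀ : ℝ) (n : ℕ) : ℝ := σ * n + T₀

noncomputable def growthFactor (σ T₀ c : ℝ) (n : ℕ) : ℝ := (total σ T₀ n + c) / total σ T₀ n

variable {σ T₀ c : ℝ}

theorem total_succ (n : ℕ) : total σ T₀ (n + 1) = total σ T₀ n + σ := by
  simp only [total]; push_cast; ring

theorem total_pos (hσ : 0 ≤ σ) (hT₀ : 0 < T₀) (n : ℕ) : 0 < total σ T₀ n := by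
  unfold total; positivity

theorem growthFactor_pos (hσ : 0 ≤ σ) (hT₀ : 0 < T₀) (hpos : 0 < T₀ + c) (n : ℕ) :
    0 < growthFactor σ T₀ c n := by
  have : 0 ≤ σ * n := by positivity
  exact div_pos (by unfold total; linarith) (total_pos hσ hT₀ n)

theorem growthFactor_le_one (hσ : 0 ≤ σ) (hT₀ : 0 < T₀) (hc : c ≤ 0) (n : ℕ) :
    growthFactor σ T₀ c n ≤ 1 :=
  div_le_one_of_le₀ (by linarith) (total_pos hσ hT₀ n).le

theorem one_le_growthFactor (hσ : 0 ≤ σ) (hT₀ : 0 < T₀) (hc : 0 ≤ c) (n : ℕ) :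
    1 ≤ growthFactor σ T₀ c n :=
  (one_le_div₀ (total_pos hσ hT₀ n)).mpr (by linarith)

/-- The unshifted bound `r n ≤ (T_{n+1} / T_n) ^ Λ` fails for `0 < Λ < 1` by concavity. -/
theorem growthFactor_succ_le_rpow (hσ : 0 < σ) (hT₀ : 0 < T₀) (hc : 0 ≤ c) (n : ℕ) :
    growthFactor σ T₀ c (n + 1) ≤ (total σ T₀ (n + 1) / total σ T₀ n) ^ (c / σ) := by
  have ht := total_pos hσ.le hT₀
  convert one_add_mul_sub_div_le_rpow_div (ht n) (ht (n + 1)) (div_nonneg hc hσ.le) using 1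
  have := (ht (n + 1)).ne'
  rw [growthFactor, total_succ] at *
  field_simp
  ring

theorem prod_growthFactor_succ_le (hσ : 0 < σ) (hT₀ : 0 < T₀) (hc : 0 ≤ c) (n : ℕ) :
    ∏ k ∈ range n, growthFactor σ T₀ c (k + 1) ≤ (total σ T₀ n / total σ T₀ 0) ^ (c / σ) := by
  have ht := total_pos hσ.le hT₀
  induction n with
  | zero => simp [(ht 0).ne']
  | succ n ih =>
    calc ∏ k ∈ range (n + 1), growthFactor σ T₀ c (k + 1)
        ≤ (total σ T₀ n / total σ T₀ 0) ^ (c / σ) *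
            (total σ T₀ (n + 1) / total σ T₀ n) ^ (c / σ) := by
          rw [prod_range_succ]
          exact mul_le_mul ih (growthFactor_succ_le_rpow hσ hT₀ hc n)
            (growthFactor_pos hσ.le hT₀ (by linarith) _).le
            (Real.rpow_nonneg (div_pos (ht n) (ht 0)).le _)
      _ = (total σ T₀ (n + 1) / total σ T₀ 0) ^ (c / σ) := by
          rw [← Real.mul_rpow (div_pos (ht n) (ht 0)).le (div_pos (ht (n + 1)) (ht n)).le,
            mul_comm, div_mul_div_cancel₀ (ht n).ne']

theorem prod_growthFactor_le (hσ : 0 < σ) (hT₀ : 0 < T₀) (hc : 0 ≤ c) (n : ℕ) :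
    ∏ k ∈ range n, growthFactor σ T₀ c k ≤
      (total σ T₀ n / total σ T₀ 0) ^ (c / σ) * growthFactor σ T₀ c 0 := by
  have hr := growthFactor_pos hσ.le hT₀ (c := c) (by linarith)
  calc ∏ k ∈ range n, growthFactor σ T₀ c k ≤ ∏ k ∈ range (n + 1), growthFactor σ T₀ c k := by
        rw [prod_range_succ]
        exact le_mul_of_one_le_right (prod_nonneg fun k _ => (hr k).le)
          (one_le_growthFactor hσ.le hT₀ hc n)
    _ = (∏ k ∈ range n, growthFactor σ T₀ c (k + 1)) * growthFactor σ T₀ c 0 :=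
        prod_range_succ' _ _
    _ ≤ (total σ T₀ n / total σ T₀ 0) ^ (c / σ) * growthFactor σ T₀ c 0 :=
        mul_le_mul_of_nonneg_right (prod_growthFactor_succ_le hσ hT₀ hc n) (hr 0).le

theorem isBigO_total_div_total_zero (hσ : 0 ≤ σ) (hT₀ : 0 < T₀) :
    (fun n => total σ T₀ n / total σ T₀ 0) =O[atTop] fun n : ℕ => (n : ℝ) := by
  refine IsBigO.of_bound ((σ + T₀) / T₀) ?_
  filter_upwards [eventually_ge_atTop 1] with n hn
  have hn' : (1 : ℝ) ≤ n := by exact_mod_cast hn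
  have ht := total_pos hσ hT₀ n
  rw [Real.norm_of_nonneg (div_pos ht (total_pos hσ hT₀ 0)).le, Real.norm_natCast]
  simp only [total, CharP.cast_eq_zero, mul_zero, zero_add]
  rw [div_mul_eq_mul_div, div_le_div_iff_of_pos_right hT₀]
  nlinarith

theorem isBigO_prod_growthFactor (hσ : 0 < σ) (hT₀ : 0 < T₀) (hpos : 0 < T₀ + c) :
    (fun n => ∏ k ∈ range n, growthFactor σ T₀ c k) =O[atTop]
      fun n : ℕ => (n : ℝ) ^ (c / σ) + 1 := by
  have hr := growthFactor_pos hσ.le hT₀ hpos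
  rcases le_total c 0 with hc | hc
  · refine (isBigO_of_le _ fun n => ?_).trans (isBigO_one_rpow_add_one _)
    rw [norm_one, Real.norm_of_nonneg (prod_nonneg fun k _ => (hr k).le)]
    exact prod_le_one (fun k _ => (hr k).le) fun k _ => growthFactor_le_one hσ.le hT₀ hc k
  · have hprod : (fun n => ∏ k ∈ range n, growthFactor σ T₀ c k) =O[atTop]
        fun n => (total σ T₀ n / total σ T₀ 0) ^ (c / σ) := by
      refine IsBigO.of_bound (growthFactor σ T₀ c 0) (Eventually.of_forall fun n => ?_)
      have hq := (div_pos (total_pos hσ.le hT₀ n) (total_pos hσ.le hT₀ 0)).le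
      rw [Real.norm_of_nonneg (prod_nonneg fun k _ => (hr k).le),
        Real.norm_of_nonneg (Real.rpow_nonneg hq _), mul_comm]
      exact prod_growthFactor_le hσ hT₀ hc n
    have hpow : (fun n => (total σ T₀ n / total σ T₀ 0) ^ (c / σ)) =O[atTop]
        fun n : ℕ => (n : ℝ) ^ (c / σ) :=
      (isBigO_total_div_total_zero hσ.le hT₀).rpow (div_nonneg hc hσ.le)
        (Eventually.of_forall fun n => Nat.cast_nonneg n)
    refine (hprod.trans hpow).trans_le fun n => ?_
    have : 0 ≤ (n : ℝ) ^ (c / σ) := by positivity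
    rw [Real.norm_of_nonneg this, Real.norm_of_nonneg (by positivity)]
    linarith

theorem prod_growthFactor_self (hσ : 0 ≤ σ) (hT₀ : 0 < T₀) (n : ℕ) :
    ∏ k ∈ range n, growthFactor σ T₀ σ k = total σ T₀ n / total σ T₀ 0 := by
  have ht := total_pos hσ hT₀
  induction n with
  | zero => simp [(ht 0).ne']
  | succ n ih =>
    rw [prod_range_succ, ih, growthFactor, ← total_succ, mul_comm, div_mul_div_cancel₀ (ht n).ne']

theorem growthFactor_mul_add (hσ : 0 < σ) (hT₀ : 0 < T₀) (b : ℝ) (n : ℕ) :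
    growthFactor σ T₀ c n * (b * total σ T₀ n / σ) + b * (1 - c / σ) =
      b * total σ T₀ (n + 1) / σ := by
  have := (total_pos hσ.le hT₀ n).ne'
  rw [growthFactor, total_succ]
  field_simp
  ring

section Recurrence

variable {a : ℕ → ℝ} {β : ℝ}

theorem sub_mul_eq_add_mul_prod (hσ : 0 < σ) (hT₀ : 0 < T₀) (hΛ : c / σ ≠ 1)
    (hrec : ∀ k, a (k + 1) = growthFactor σ T₀ c k * a k + β) (n : ℕ) :
    a n - β / (1 - c / σ) * n = β / (1 - c / σ) * T₀ / σ +
      (a 0 - β / (1 - c / σ) * T₀ / σ) * ∏ k ∈ range n, growthFactor σ T₀ c k := by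
  set b := β / (1 - c / σ)
  have hβb : β = b * (1 - c / σ) := (div_mul_cancel₀ β (sub_ne_zero.mpr hΛ.symm)).symm
  have hsol := sub_eq_mul_prod_of_affine_recurrence hrec
    (p := fun n => b * total σ T₀ n / σ) fun n => by rw [hβb, growthFactor_mul_add hσ hT₀]
  simp only [total, CharP.cast_eq_zero, mul_zero, zero_add] at hsol
  field_simp at hsol ⊢
  linarith [hsol n]

theorem isBigO_sub_mul_of_recurrence (hσ : 0 < σ) (hT₀ : 0 < T₀) (hpos : 0 < T₀ + c)
    (hΛ : c / σ ≠ 1) (hrec : ∀ k, a (k + 1) = growthFactor σ T₀ c k * a k + β) :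
    (fun n : ℕ => a n - β / (1 - c / σ) * n) =O[atTop] fun n : ℕ => (n : ℝ) ^ (c / σ) + 1 := by
  have hdecomp : (fun n : ℕ => a n - β / (1 - c / σ) * n) =
      fun n => β / (1 - c / σ) * T₀ / σ * 1 +
        (a 0 - β / (1 - c / σ) * T₀ / σ) * ∏ k ∈ range n, growthFactor σ T₀ c k :=
    funext fun n => by rw [sub_mul_eq_add_mul_prod hσ hT₀ hΛ hrec, mul_one]
  rw [hdecomp]
  exact ((isBigO_one_rpow_add_one _).const_mul_left _).add
    ((isBigO_prod_growthFactor hσ hT₀ hpos).const_mul_left _)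

theorem eq_mul_total_div_of_recurrence (hσ : 0 ≤ σ) (hT₀ : 0 < T₀)
    (hrec : ∀ k, a (k + 1) = growthFactor σ T₀ σ k * a k) (n : ℕ) :
    a n = a 0 * total σ T₀ n / total σ T₀ 0 := by
  have hsol := sub_eq_mul_prod_of_affine_recurrence (a := a) (p := fun _ => 0) (β := 0)
    (fun k => by rw [hrec, add_zero]) (fun k => by rw [mul_zero, add_zero]) n
  rw [prod_growthFactor_self hσ hT₀] at hsol
  simpa [mul_div_assoc] using hsol

end Recurrence

end AffineUrn

open AffineUrn

theorem expectation_asymptotics_affine_urn_general {Ω : Type*} {m0 : MeasurableSpace Ω}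
    (μ : Measure Ω) [IsProbabilityMeasure μ] (𝓕 : Filtration ℕ m0)
    (W : ℕ → Ω → ℝ) (σ T₀ c β : ℝ) (hσ : 1 ≤ σ) (hT₀ : 0 < T₀)
    (hpos : 0 < T₀ + c)
    (hint : ∀ n, Integrable (W n) μ)
    (hcond : ∀ n, 1 ≤ n →
      μ[W n | 𝓕 (n - 1)] =ᵐ[μ]
        fun ω => ((σ * (n - 1 : ℕ) + T₀ + c) / (σ * (n - 1 : ℕ) + T₀)) * W (n - 1) ω + β) :
    (c / σ < 1 →
      (fun n : ℕ => (∫ ω, W n ω ∂μ) - (β / (1 - c / σ)) * n)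
        =O[atTop] fun n : ℕ => (n : ℝ) ^ (c / σ) + 1) ∧
    (c / σ = 1 → β = 0 →
      ∀ n : ℕ, (∫ ω, W n ω ∂μ) = (∫ ω, W 0 ω ∂μ) * (n * σ + T₀) / T₀) := by
  have hσ0 : 0 < σ := one_pos.trans_le hσ
  have hrec : ∀ k, ∫ ω, W (k + 1) ω ∂μ = growthFactor σ T₀ c k * ∫ ω, W k ω ∂μ + β := fun k =>
    integral_eq_of_condExp_ae_eq_affine (𝓕.le k) (hint k) (hcond (k + 1) k.succ_pos)
  refine ⟨fun hΛ => isBigO_sub_mul_of_recurrence hσ0 hT₀ hpos hΛ.ne hrec, fun hΛ hβ n => ?_⟩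
  obtain rfl : σ = c := ((div_eq_one_iff_eq hσ0.ne').mp hΛ).symm
  subst hβ
  refine (eq_mul_total_div_of_recurrence (a := fun n => ∫ ω, W n ω ∂μ) hσ0.le hT₀
    (fun k => by rw [hrec, add_zero]) n).trans ?_
  simp only [total, CharP.cast_eq_zero, mul_zero, zero_add]
  ring

/-- Asymptotics of the expectation for an affine urn recursion
`E[W_n | 𝓕_{n-1}] = ((T_{n-1}+c)/T_{n-1}) W_{n-1} + β` with `T_n = σn + T₀` and
index `Λ = c/σ`: if `Λ < 1` then `E[W_n] = (β/(1-Λ)) n + O(n^Λ) + O(1)`, and if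
`Λ = 1` (with `β = 0`) then `E[W_n] = W₀ (nσ + T₀)/T₀` exactly. -/
theorem expectation_asymptotics_affine_urn {Ω : Type*} {m0 : MeasurableSpace Ω}
    (μ : Measure Ω) [IsProbabilityMeasure μ] (𝓕 : Filtration ℕ m0)
    (W : ℕ → Ω → ℝ) (σ T₀ c β : ℝ) (hσ : 1 ≤ σ) (hT₀ : 0 < T₀)
    (hpos : 0 < T₀ + c) (hβ : 0 ≤ β)
    (hadapted : Adapted 𝓕 W) (hint : ∀ n, Integrable (W n) μ)
    (hcond : ∀ n, 1 ≤ n →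
      μ[W n | 𝓕 (n - 1)] =ᵐ[μ]
        fun ω => ((σ * (n - 1 : ℕ) + T₀ + c) / (σ * (n - 1 : ℕ) + T₀)) * W (n - 1) ω + β) :
    (c / σ < 1 →
      (fun n : ℕ => (∫ ω, W n ω ∂μ) - (β / (1 - c / σ)) * n)
        =O[atTop] fun n : ℕ => (n : ℝ) ^ (c / σ) + 1) ∧
    (c / σ = 1 → β = 0 →
      ∀ n : ℕ, (∫ ω, W n ω ∂μ) = (∫ ω, W 0 ω ∂μ) * (n * σ + T₀) / T₀) :=
  expectation_asymptotics_affine_urn_general μ 𝓕 W σ T₀ c β hσ hT₀ hpos hint hcond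
end

section
/- Let (Z_n) be a sequence of random variables uniformly bounded in absolute value such that E[Z_n² | 𝓕_{n−1}] ≤ c_n·Z_{n−1}² + d_n with deterministic 0 < c_n < 1, d_n ≥ 0, ∑ d_n < ∞ and ∏_{i=1}^n c_i → 0. Suppose moreover there is κ > 0 with E[Z_n² + κ/T_n | 𝓕_{n−1}] ≤ Z_{n−1}² + κ/T_{n−1} for a positive increasing sequence T_n → ∞. Then Z_n² + κ/T_n is a nonnegative supermartingale, Z_n² converges almost surely, E[Z_n²] → 0, and consequently Z_n → 0 almost surely. -/
open Finset MeasureTheory Filter Topology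

/-!
`Z_n² + κ/T_n` is a nonnegative supermartingale, hence bounded in `L¹` and a.s. convergent by
Doob's theorem; since `κ/T_n → 0`, `Z_n²` converges a.s. Integrating the conditional recursion,
`e_n = E[Z_n²]` satisfies `e_n ≤ c_n e_{n-1} + d_n`, and iterating gives
`e_n ≤ (∏_{m<i≤n} c_i) e_m + ∑_{m<k≤n} d_k`, which is small once the tail of `∑ d` is small and
then `n` is large. So `Z_n² → 0` in `L¹`, hence in measure, hence a.s. along a subsequence, and
the a.s. limit of `Z_n²` must be `0`.
-/
section Recursion

variable {a c d : ℕ → ℝ}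

theorem le_prod_mul_add_sum_of_le_mul_add
    (hrec : ∀ n, 1 ≤ n → a n ≤ c n * a (n - 1) + d n)
    (hc : ∀ n, 1 ≤ n → 0 ≤ c n ∧ c n ≤ 1) (hd : ∀ n, 1 ≤ n → 0 ≤ d n)
    {m n : ℕ} (hmn : m ≤ n) :
    a n ≤ (∏ i ∈ Ioc m n, c i) * a m + ∑ k ∈ Ioc m n, d k := by
  induction n, hmn using Nat.le_induction with
  | base => simp
  | succ n hmn ih =>
    obtain ⟨hc₀, hc₁⟩ := hc (n + 1) (by omega)
    have hS : 0 ≤ ∑ k ∈ Ioc m n, d k :=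
      sum_nonneg fun k hk => hd k (by have := (mem_Ioc.1 hk).1; omega)
    rw [prod_Ioc_succ_top hmn, sum_Ioc_succ_top hmn]
    calc a (n + 1) ≤ c (n + 1) * a n + d (n + 1) := by simpa using hrec (n + 1) (by omega)
      _ ≤ c (n + 1) * ((∏ i ∈ Ioc m n, c i) * a m + ∑ k ∈ Ioc m n, d k) + d (n + 1) := by
        gcongr
      _ ≤ _ := by nlinarith

theorem tendsto_zero_of_le_mul_add (ha : ∀ n, 0 ≤ a n)
    (hrec : ∀ n, 1 ≤ n → a n ≤ c n * a (n - 1) + d n)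
    (hc : ∀ n, 1 ≤ n → 0 < c n ∧ c n ≤ 1) (hd : ∀ n, 1 ≤ n → 0 ≤ d n) (hsum : Summable d)
    (hprod : Tendsto (fun n => ∏ i ∈ Icc 1 n, c i) atTop (𝓝 0)) :
    Tendsto a atTop (𝓝 0) := by
  set P : ℕ → ℝ := fun n => ∏ i ∈ Icc 1 n, c i
  set S : ℕ → ℝ := fun n => ∑ k ∈ range n, d k
  have hP : ∀ n, 0 < P n := fun n => prod_pos fun i hi => (hc i (mem_Icc.1 hi).1).1
  have hbound : ∀ m n, m ≤ n → a n ≤ P n / P m * a m + (S (n + 1) - S (m + 1)) := by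
    intro m n hmn
    have hprod_eq : ∏ i ∈ Ioc m n, c i = P n / P m := by
      rw [eq_div_iff (hP m).ne', mul_comm]
      simpa only [P, ← Icc_add_one_left_eq_Ioc, zero_add] using prod_Ioc_consecutive c m.zero_le hmn
    have hsum_eq : ∑ k ∈ Ioc m n, d k = S (n + 1) - S (m + 1) := by
      rw [← Ico_add_one_add_one_eq_Ioc, sum_Ico_eq_sub _ (by omega)]
    simpa only [hprod_eq, hsum_eq] using
      le_prod_mul_add_sum_of_le_mul_add hrec (fun n hn => ⟨(hc n hn).1.le, (hc n hn).2⟩) hd hmn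
  refine tendsto_order.2 ⟨fun ε hε => .of_forall fun n => hε.trans_le (ha n), fun ε hε => ?_⟩
  obtain ⟨N, hN⟩ :=
    Metric.cauchySeq_iff.1 hsum.hasSum.tendsto_sum_nat.cauchySeq (ε / 2) (half_pos hε)
  have hq : Tendsto (fun n => P n / P N * a N) atTop (𝓝 0) := by
    simpa using (hprod.div_const (P N)).mul_const (a N)
  filter_upwards [eventually_ge_atTop N, hq.eventually (gt_mem_nhds (half_pos hε))] with n hn hqn
  have hSn : S (n + 1) - S (N + 1) < ε / 2 :=
    (le_abs_self _).trans_lt (hN (n + 1) (by omega) (N + 1) (by omega))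
  linarith [hbound N n hn]

end Recursion

section Probability

variable {Ω : Type*} {m0 : MeasurableSpace Ω} {μ : Measure Ω}

theorem integral_le_of_condExp_le {m : MeasurableSpace Ω} [IsFiniteMeasure μ] {f g : Ω → ℝ}
    (hm : m ≤ m0) (hg : Integrable g μ) (hfg : μ[f | m] ≤ᵐ[μ] g) :
    ∫ ω, f ω ∂μ ≤ ∫ ω, g ω ∂μ := by
  rw [← integral_condExp hm]
  exact integral_mono_ae integrable_condExp hg hfg

theorem eLpNorm_one_eq_ofReal_integral_of_nonneg {f : Ω → ℝ} (hfi : Integrable f μ)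
    (hf : 0 ≤ᵐ[μ] f) : eLpNorm f 1 μ = ENNReal.ofReal (∫ ω, f ω ∂μ) := by
  rw [eLpNorm_one_eq_lintegral_enorm, ← ofReal_integral_norm_eq_lintegral_enorm hfi]
  congr 1
  exact integral_congr_ae (by filter_upwards [hf] with ω hω using Real.norm_of_nonneg hω)

theorem MeasureTheory.Supermartingale.eLpNorm_one_le_of_nonneg [IsFiniteMeasure μ]
    {ℱ : Filtration ℕ m0} {f : ℕ → Ω → ℝ} (hf : Supermartingale f ℱ μ) (hf₀ : ∀ n, 0 ≤ᵐ[μ] f n)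
    (n : ℕ) : eLpNorm (f n) 1 μ ≤ ENNReal.ofReal (∫ ω, f 0 ω ∂μ) := by
  rw [eLpNorm_one_eq_ofReal_integral_of_nonneg (hf.integrable n) (hf₀ n)]
  exact ENNReal.ofReal_le_ofReal (by simpa using hf.setIntegral_le n.zero_le MeasurableSet.univ)

theorem MeasureTheory.Supermartingale.exists_ae_tendsto_of_nonneg [IsFiniteMeasure μ]
    {ℱ : Filtration ℕ m0} {f : ℕ → Ω → ℝ} (hf : Supermartingale f ℱ μ) (hf₀ : ∀ n, 0 ≤ᵐ[μ] f n) :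
    ∀ᵐ ω ∂μ, ∃ L, Tendsto (fun n => f n ω) atTop (𝓝 L) := by
  filter_upwards [hf.neg.exists_ae_tendsto_of_bdd fun n =>
    (eLpNorm_neg (f n) 1 μ).trans_le (hf.eLpNorm_one_le_of_nonneg hf₀ n)] with ω ⟨L, hL⟩
  exact ⟨-L, by simpa using hL.neg⟩

theorem ae_tendsto_zero_of_tendsto_integral_zero {f : ℕ → Ω → ℝ} (hf₀ : ∀ n, 0 ≤ᵐ[μ] f n)
    (hfi : ∀ n, Integrable (f n) μ) (hconv : ∀ᵐ ω ∂μ, ∃ L, Tendsto (fun n => f n ω) atTop (𝓝 L))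
    (hint : Tendsto (fun n => ∫ ω, f n ω ∂μ) atTop (𝓝 0)) :
    ∀ᵐ ω ∂μ, Tendsto (fun n => f n ω) atTop (𝓝 0) := by
  have hL1 : TendstoInMeasure μ f atTop 0 := by
    refine tendstoInMeasure_of_tendsto_eLpNorm one_ne_zero (fun n => (hfi n).1)
      aestronglyMeasurable_zero ?_
    simpa [Function.comp_def, eLpNorm_one_eq_ofReal_integral_of_nonneg (hfi _) (hf₀ _)] using
      (ENNReal.continuous_ofReal.tendsto 0).comp hint
  obtain ⟨ns, hns, hsub⟩ := hL1.exists_seq_tendsto_ae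
  filter_upwards [hconv, hsub] with ω ⟨L, hL⟩ hω
  rwa [tendsto_nhds_unique (hL.comp hns.tendsto_atTop) hω] at hL

end Probability

theorem supermartingale_Zn_tendsto_zero_general {Ω : Type*} {m0 : MeasurableSpace Ω}
    (μ : Measure Ω) [IsProbabilityMeasure μ] (𝓕 : Filtration ℕ m0)
    (Z : ℕ → Ω → ℝ) (c d T : ℕ → ℝ) (κ : ℝ) (hκ : 0 < κ)
    (hadapted : Adapted 𝓕 Z)
    (hint : ∀ n, Integrable (fun ω => Z n ω ^ 2) μ)
    (hc : ∀ n, 1 ≤ n → 0 < c n ∧ c n < 1) (hd : ∀ n, 1 ≤ n → 0 ≤ d n)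
    (hsum : Summable d)
    (hprod : Tendsto (fun n => ∏ i ∈ Icc 1 n, c i) atTop (𝓝 0))
    (hT : ∀ n, 0 < T n) (hTtop : Tendsto T atTop atTop)
    (hrec : ∀ n, 1 ≤ n →
      μ[fun ω => Z n ω ^ 2 | 𝓕 (n - 1)] ≤ᵐ[μ] fun ω => c n * Z (n - 1) ω ^ 2 + d n)
    (hsuper : ∀ n, 1 ≤ n →
      μ[fun ω => Z n ω ^ 2 + κ / T n | 𝓕 (n - 1)]
        ≤ᵐ[μ] fun ω => Z (n - 1) ω ^ 2 + κ / T (n - 1)) :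
    Supermartingale (fun n ω => Z n ω ^ 2 + κ / T n) 𝓕 μ ∧
    (∀ n, 0 ≤ᵐ[μ] fun ω => Z n ω ^ 2 + κ / T n) ∧
    (∀ᵐ ω ∂μ, ∃ L : ℝ, Tendsto (fun n => Z n ω ^ 2) atTop (𝓝 L)) ∧
    Tendsto (fun n => ∫ ω, Z n ω ^ 2 ∂μ) atTop (𝓝 0) ∧
    (∀ᵐ ω ∂μ, Tendsto (fun n => Z n ω) atTop (𝓝 0)) := by
  have hsm : Supermartingale (fun n ω => Z n ω ^ 2 + κ / T n) 𝓕 μ :=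
    supermartingale_nat (fun n => ((hadapted.stronglyAdapted n).pow 2).add stronglyMeasurable_const)
      (fun n => (hint n).add (integrable_const _)) fun n => by simpa using hsuper (n + 1) n.succ_pos
  have hnonneg : ∀ n, 0 ≤ᵐ[μ] fun ω => Z n ω ^ 2 + κ / T n :=
    fun n => .of_forall fun ω => by have := hT n; positivity
  have hconv : ∀ᵐ ω ∂μ, ∃ L : ℝ, Tendsto (fun n => Z n ω ^ 2) atTop (𝓝 L) := by
    filter_upwards [hsm.exists_ae_tendsto_of_nonneg hnonneg] with ω ⟨L, hL⟩
    exact ⟨L, by simpa using hL.sub ((tendsto_const_nhds (x := κ)).div_atTop hTtop)⟩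
  have hmean : Tendsto (fun n => ∫ ω, Z n ω ^ 2 ∂μ) atTop (𝓝 0) := by
    refine tendsto_zero_of_le_mul_add (fun n => integral_nonneg fun ω => sq_nonneg _)
      (fun n hn => ?_) (fun n hn => ⟨(hc n hn).1, (hc n hn).2.le⟩) hd hsum hprod
    have hrhs : Integrable (fun ω => c n * Z (n - 1) ω ^ 2 + d n) μ :=
      ((hint _).const_mul _).add (integrable_const _)
    refine (integral_le_of_condExp_le (𝓕.le _) hrhs (hrec n hn)).trans_eq ?_
    rw [integral_add ((hint _).const_mul _) (integrable_const _), integral_const_mul]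
    simp
  refine ⟨hsm, hnonneg, hconv, hmean, ?_⟩
  filter_upwards [ae_tendsto_zero_of_tendsto_integral_zero
    (fun n => .of_forall fun ω => sq_nonneg _) hint hconv hmean] with ω hω
  refine (tendsto_zero_iff_abs_tendsto_zero _).2 ?_
  simpa [Function.comp_def, Real.sqrt_sq_eq_abs] using hω.sqrt

/-- Supermartingale argument for almost sure convergence of `Z_n` to `0`:
if `E[Z_n² | 𝓕_{n-1}] ≤ c_n Z_{n-1}² + d_n` with `0 < c_n < 1`, `∑ d_n < ∞`,
`∏ c_i → 0`, and `Z_n² + κ/T_n` is a conditional supermartingale for some positive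
increasing `T_n → ∞`, then `Z_n² + κ/T_n` is a nonnegative supermartingale, `Z_n²`
converges a.s., `E[Z_n²] → 0`, and `Z_n → 0` almost surely. -/
theorem supermartingale_Zn_tendsto_zero {Ω : Type*} {m0 : MeasurableSpace Ω}
    (μ : Measure Ω) [IsProbabilityMeasure μ] (𝓕 : Filtration ℕ m0)
    (Z : ℕ → Ω → ℝ) (c d T : ℕ → ℝ) (K κ : ℝ) (hκ : 0 < κ)
    (hadapted : Adapted 𝓕 Z)
    (hint : ∀ n, Integrable (fun ω => Z n ω ^ 2) μ)
    (hbdd : ∀ n, ∀ᵐ ω ∂μ, |Z n ω| ≤ K)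
    (hc : ∀ n, 1 ≤ n → 0 < c n ∧ c n < 1) (hd : ∀ n, 1 ≤ n → 0 ≤ d n)
    (hsum : Summable d)
    (hprod : Tendsto (fun n => ∏ i ∈ Icc 1 n, c i) atTop (𝓝 0))
    (hT : ∀ n, 0 < T n) (hTmono : Monotone T) (hTtop : Tendsto T atTop atTop)
    (hrec : ∀ n, 1 ≤ n →
      μ[fun ω => Z n ω ^ 2 | 𝓕 (n - 1)] ≤ᵐ[μ] fun ω => c n * Z (n - 1) ω ^ 2 + d n)
    (hsuper : ∀ n, 1 ≤ n →
      μ[fun ω => Z n ω ^ 2 + κ / T n | 𝓕 (n - 1)]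
        ≤ᵐ[μ] fun ω => Z (n - 1) ω ^ 2 + κ / T (n - 1)) :
    Supermartingale (fun n ω => Z n ω ^ 2 + κ / T n) 𝓕 μ ∧
    (∀ n, 0 ≤ᵐ[μ] fun ω => Z n ω ^ 2 + κ / T n) ∧
    (∀ᵐ ω ∂μ, ∃ L : ℝ, Tendsto (fun n => Z n ω ^ 2) atTop (𝓝 L)) ∧
    Tendsto (fun n => ∫ ω, Z n ω ^ 2 ∂μ) atTop (𝓝 0) ∧
    (∀ᵐ ω ∂μ, Tendsto (fun n => Z n ω) atTop (𝓝 0)) :=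
  supermartingale_Zn_tendsto_zero_general μ 𝓕 Z c d T κ hκ hadapted hint hc hd hsum hprod hT hTtop
    hrec hsuper
end
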